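/- Let A be a C*-algebra acting on a Hilbert module E via a homomorphism into the adjointable operators, let ψ be a faithful state of the coefficient C*-algebra B, and let E_ψ be the Hilbert space completion of E in the inner product ⟨f₁,f₂⟩_ψ = ψ(⟨f₁,f₂⟩_B). Then every bounded adjointable operator T on E extends to a bounded operator on E_ψ, and the localization map B(E) → B(E_ψ) so defined is an injective, hence isometric, homomorphism of C*-algebras. -/

import Mathlib

/-!
For adjointable `T` with adjoint `S`, the operator `R = S T` is symmetric for the semi-inner
product `ψ ⟨·,·⟩`, so Cauchy–Schwarz in `E_ψ` iterated along the powers `R ^ 2 ^ k` (the power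
trick) gives `‖j (T f)‖ ≤ ‖T‖ ‖j f‖`; hence `T` extends by density with `‖T'‖ ≤ ‖T‖`.
Conversely, if `‖j (T f)‖ ≤ c ‖j f‖` for all `f`, then, `T` being `B`-linear, testing on `f • b`
gives `ψ (b⋆ (c² ⟨f,f⟩ - ⟨T f, T f⟩) b) ≥ 0` for every `b`, and faithfulness of `ψ` upgrades this
to `⟨T f, T f⟩ ≤ c² ⟨f,f⟩` in `B`, whence `‖T‖ ≤ c`.
-/

open scoped ComplexOrder

/-- The Hilbert C⋆-module class as it stood in Mathlib (December 2024): a right module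
(action of `Aᵐᵒᵖ`) with `A`-valued inner product, linear in the second argument. -/
class CStarModuleRight (A E : Type*) [NonUnitalSemiring A] [StarRing A] [Module ℂ A]
    [AddCommGroup E] [Module ℂ E] [PartialOrder A] [SMul Aᵐᵒᵖ E] [Norm A] [Norm E]
    extends Inner A E where
  inner_add_right {x} {y} {z} : inner x (y + z) = inner x y + inner x z
  inner_self_nonneg {x} : 0 ≤ inner x x
  inner_self {x} : inner x x = 0 ↔ x = 0
  inner_op_smul_right {a : A} {x y : E} : inner x (MulOpposite.op a • y) = inner x y * a
  inner_smul_right_complex {z : ℂ} {x} {y} : inner x (z • y) = z • inner x y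
  star_inner x y : star (inner x y) = inner y x
  norm_eq_sqrt_norm_inner_self x : ‖x‖ = √‖inner x x‖

open Filter in
lemma le_of_forall_pow_two_pow_le_mul_pow {x y C : ℝ} (hy : 0 ≤ y)
    (h : ∀ k : ℕ, x ^ 2 ^ k ≤ C * y ^ 2 ^ k) : x ≤ y := by
  by_contra! hxy
  have hx : 0 < x := hy.trans_lt hxy
  have hlim : Tendsto (fun k : ℕ => C * (y / x) ^ 2 ^ k) atTop (nhds (C * 0)) :=
    ((tendsto_pow_atTop_nhds_zero_of_lt_one (div_nonneg hy hx.le) ((div_lt_one hx).2 hxy)).comp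
      (tendsto_pow_atTop_atTop_of_one_lt one_lt_two)).const_mul C
  have hone : ∀ k : ℕ, 1 ≤ C * (y / x) ^ 2 ^ k := fun k => by
    rw [div_pow, mul_div_assoc', one_le_div (by positivity)]
    exact h k
  have := ge_of_tendsto' hlim hone
  norm_num at this

lemma le_mul_of_sq_le_mul_two_mul {u : ℕ → ℝ} {a b C : ℝ} (ha : 0 ≤ a) (hb : 0 ≤ b)
    (hu : 0 ≤ u 1) (hsq : ∀ m, u m ^ 2 ≤ b * u (2 * m)) (hC : ∀ n, u n ≤ C * a ^ n) :
    u 1 ≤ a * b := by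
  have hpow : ∀ k : ℕ, u 1 ^ 2 ^ k ≤ b ^ (2 ^ k - 1) * u (2 ^ k) := by
    intro k
    induction k with
    | zero => simp
    | succ k ih =>
      have hk : 1 ≤ 2 ^ k := Nat.one_le_two_pow
      calc u 1 ^ 2 ^ (k + 1) = (u 1 ^ 2 ^ k) ^ 2 := by rw [pow_succ, pow_mul]
        _ ≤ (b ^ (2 ^ k - 1) * u (2 ^ k)) ^ 2 := pow_le_pow_left₀ (pow_nonneg hu _) ih 2
        _ = b ^ (2 * (2 ^ k - 1)) * u (2 ^ k) ^ 2 := by rw [mul_pow, ← pow_mul, mul_comm 2]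
        _ ≤ b ^ (2 * (2 ^ k - 1)) * (b * u (2 * 2 ^ k)) := by gcongr; exact hsq _
        _ = b ^ (2 ^ (k + 1) - 1) * u (2 ^ (k + 1)) := by
          rw [← mul_assoc, ← pow_succ, pow_succ' 2 k]
          congr 2
          omega
  rcases hb.eq_or_lt with rfl | hb
  · nlinarith [hsq 1]
  refine le_of_forall_pow_two_pow_le_mul_pow (C := C / b) (by positivity) fun k => ?_
  calc u 1 ^ 2 ^ k ≤ b ^ (2 ^ k - 1) * (C * a ^ 2 ^ k) :=
        (hpow k).trans (by gcongr; exact hC _)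
    _ = C / b * (a * b) ^ 2 ^ k := by
      rw [mul_pow, ← pow_sub_one_mul (by positivity : 2 ^ k ≠ 0) b]
      field_simp

section SemiInner

variable {𝕜 V H : Type*} [RCLike 𝕜] [NormedAddCommGroup H] [InnerProductSpace 𝕜 H]

lemma inner_map_iterate_left_eq {j : V → H} {R : V → V}
    (hR : ∀ x y, inner 𝕜 (j (R x)) (j y) = inner 𝕜 (j x) (j (R y))) (n : ℕ) (x y : V) :
    inner 𝕜 (j (R^[n] x)) (j y) = inner 𝕜 (j x) (j (R^[n] y)) := by
  induction n generalizing x with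
  | zero => rfl
  | succ n ih => rw [Function.iterate_succ_apply, ih, hR, ← Function.iterate_succ_apply' R]

lemma norm_map_apply_le_of_symmetric {j : V → H} {R : V → V}
    (hR : ∀ x y, inner 𝕜 (j (R x)) (j y) = inner 𝕜 (j x) (j (R y))) (x : V) {a C : ℝ}
    (ha : 0 ≤ a) (hC : ∀ n, ‖j (R^[n] x)‖ ≤ C * a ^ n) : ‖j (R x)‖ ≤ a * ‖j x‖ := by
  refine le_mul_of_sq_le_mul_two_mul (u := fun n => ‖j (R^[n] x)‖) ha (norm_nonneg _)
    (norm_nonneg _) (fun m => ?_) hC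
  calc ‖j (R^[m] x)‖ ^ 2 = RCLike.re (inner 𝕜 (j (R^[m] x)) (j (R^[m] x))) :=
        (inner_self_eq_norm_sq _).symm
    _ = RCLike.re (inner 𝕜 (j x) (j (R^[2 * m] x))) := by
        rw [inner_map_iterate_left_eq hR, ← Function.iterate_add_apply, two_mul]
    _ ≤ ‖j x‖ * ‖j (R^[2 * m] x)‖ := (RCLike.re_le_norm _).trans (norm_inner_le_norm _ _)

end SemiInner

namespace CStarModuleRight

section Algebraic

variable {A E : Type*} [NonUnitalRing A] [StarRing A] [Module ℂ A] [PartialOrder A] [Norm A]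
  [AddCommGroup E] [Module ℂ E] [SMul Aᵐᵒᵖ E] [Norm E] [CStarModuleRight A E]

lemma inner_op_smul_left {a : A} {x y : E} :
    inner A (MulOpposite.op a • x) y = star a * inner A x y := by
  rw [← star_inner, inner_op_smul_right, star_mul, star_inner]

lemma inner_zero_right {x : E} : inner A x (0 : E) = 0 :=
  map_zero (AddMonoidHom.mk' (inner A x) fun _ _ => inner_add_right)

lemma inner_zero_left {x : E} : inner A (0 : E) x = 0 := by
  rw [← star_inner, inner_zero_right, star_zero]

lemma inner_sub_right {x y z : E} : inner A x (y - z) = inner A x y - inner A x z :=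
  map_sub (AddMonoidHom.mk' (inner A x) fun _ _ => inner_add_right) y z

lemma inner_sub_left {x y z : E} : inner A (x - y) z = inner A x z - inner A y z := by
  rw [← star_inner, inner_sub_right, star_sub, star_inner, star_inner]

lemma ext_inner_left {x y : E} (h : ∀ v : E, inner A v x = inner A v y) : x = y := by
  rw [← sub_eq_zero, ← inner_self (A := A), inner_sub_right, h, sub_self]

lemma inner_smul_right_real [StarModule ℂ A] {r : ℝ} {x y : E} :
    inner A x (r • y) = r • inner A x y := by
  rw [← Complex.coe_smul, inner_smul_right_complex, Complex.coe_smul]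

lemma inner_smul_left_real [StarModule ℂ A] {r : ℝ} {x y : E} :
    inner A (r • x) y = r • inner A x y := by
  rw [← star_inner, inner_smul_right_real, ← Complex.coe_smul, star_smul, Complex.star_def,
    Complex.conj_ofReal, Complex.coe_smul, star_inner]

variable (A) in
def IsAdjointPair (T S : E → E) : Prop := ∀ f g, inner A (T f) g = inner A f (S g)

lemma IsAdjointPair.symm {T S : E → E} (h : IsAdjointPair A T S) : IsAdjointPair A S T :=
  fun f g => by rw [← star_inner, ← h, star_inner]

lemma IsAdjointPair.map_op_smul {T S : E → E} (h : IsAdjointPair A T S) (b : A) (u : E) :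
    T (MulOpposite.op b • u) = MulOpposite.op b • T u :=
  ext_inner_left (A := A) fun v => by
    rw [← h.symm, inner_op_smul_right, inner_op_smul_right, h.symm]

end Algebraic

variable {A E : Type*} [NonUnitalCStarAlgebra A] [PartialOrder A]
  [NormedAddCommGroup E] [NormedSpace ℂ E] [SMul Aᵐᵒᵖ E] [CStarModuleRight A E]

lemma norm_sq_eq {x : E} : ‖x‖ ^ 2 = ‖inner A x x‖ := by
  rw [norm_eq_sqrt_norm_inner_self (A := A), Real.sq_sqrt (norm_nonneg _)]

variable [StarOrderedRing A]

lemma inner_mul_inner_swap_le {x y : E} (hx : x ≠ 0) :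
    inner A y x * inner A x y ≤ ‖x‖ ^ 2 • inner A y y := by
  have hr : 0 < ‖x‖ ^ 2 := by have := norm_pos_iff.mpr hx; positivity
  have h₁ : ∀ a : A,
      (0 : A) ≤ ‖x‖ ^ 2 • (star a * a) - ‖x‖ ^ 2 • (star a * inner A x y)
                - ‖x‖ ^ 2 • (inner A y x * a) + ‖x‖ ^ 2 • (‖x‖ ^ 2 • inner A y y) := fun a => by
    calc (0 : A) ≤ inner A (MulOpposite.op a • x - ‖x‖ ^ 2 • y)
          (MulOpposite.op a • x - ‖x‖ ^ 2 • y) := inner_self_nonneg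
      _ = star a * inner A x x * a - ‖x‖ ^ 2 • (star a * inner A x y)
            - ‖x‖ ^ 2 • (inner A y x * a) + ‖x‖ ^ 2 • (‖x‖ ^ 2 • inner A y y) := by
          simp only [inner_sub_right, inner_op_smul_right, inner_sub_left,
            inner_op_smul_left, inner_smul_left_real,
            inner_smul_right_real, smul_sub, sub_mul, mul_assoc, smul_mul_assoc]
          abel
      _ ≤ ‖x‖ ^ 2 • (star a * a) - ‖x‖ ^ 2 • (star a * inner A x y)
            - ‖x‖ ^ 2 • (inner A y x * a) + ‖x‖ ^ 2 • (‖x‖ ^ 2 • inner A y y) := by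
          gcongr
          calc _ ≤ ‖inner A x x‖ • (star a * a) :=
              CStarAlgebra.star_left_conjugate_le_norm_smul (hb := star_inner x x)
            _ = ‖x‖ ^ 2 • (star a * a) := by rw [← norm_sq_eq]
  specialize h₁ (inner A x y)
  simp only [star_inner, sub_self, zero_sub, le_neg_add_iff_add_le, add_zero] at h₁
  rwa [smul_le_smul_iff_of_pos_left hr] at h₁

variable (A) in
lemma norm_inner_le {x y : E} : ‖inner A x y‖ ≤ ‖x‖ * ‖y‖ := by
  rcases eq_or_ne x 0 with rfl | hx
  · rw [inner_zero_left, norm_zero]; positivity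
  refine le_of_pow_le_pow_left₀ two_ne_zero (by positivity) ?_
  calc ‖inner A x y‖ ^ 2 = ‖inner A y x * inner A x y‖ := by
        rw [← star_inner x, CStarRing.norm_star_mul_self, pow_two]
    _ ≤ ‖‖x‖ ^ 2 • inner A y y‖ := by
        refine CStarAlgebra.norm_le_norm_of_nonneg_of_le ?_ (inner_mul_inner_swap_le hx)
        rw [← star_inner x]
        exact star_mul_self_nonneg _
    _ = (‖x‖ * ‖y‖) ^ 2 := by
        rw [norm_smul, Real.norm_of_nonneg (by positivity), ← norm_sq_eq, mul_pow]

lemma IsAdjointPair.opNorm_le {T S : E →L[ℂ] E} (h : IsAdjointPair A T S) : ‖T‖ ≤ ‖S‖ := by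
  refine T.opNorm_le_bound (norm_nonneg _) fun f => ?_
  rcases (norm_nonneg (T f)).eq_or_lt with h0 | hpos
  · rw [← h0]; positivity
  refine le_of_mul_le_mul_right ?_ hpos
  calc ‖T f‖ * ‖T f‖ = ‖inner A f (S (T f))‖ := by rw [← pow_two, norm_sq_eq (A := A), h _ _]
    _ ≤ ‖f‖ * ‖S (T f)‖ := norm_inner_le A
    _ ≤ ‖f‖ * (‖S‖ * ‖T f‖) := by gcongr; exact S.le_opNorm _
    _ = ‖S‖ * ‖f‖ * ‖T f‖ := by ring

end CStarModuleRight

lemma IsSelfAdjoint.eq_zero_of_mul_mul_self_eq_zero {A : Type*} [NonUnitalNormedRing A]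
    [StarRing A] [CStarRing A] {a : A} (ha : IsSelfAdjoint a) (h : a * a * a = 0) : a = 0 := by
  have hsq : a * a = 0 := by
    rw [← CStarRing.star_mul_self_eq_zero_iff, star_mul, ha.star_eq,
      show a * a * (a * a) = a * (a * a * a) by noncomm_ring, h, mul_zero]
  exact (CStarRing.star_mul_self_eq_zero_iff a).1 (by rwa [ha.star_eq])

lemma nonneg_of_forall_nonneg_map_star_mul_mul {B : Type*} [NonUnitalCStarAlgebra B]
    [PartialOrder B] [StarOrderedRing B] (ψ : B →ₗ[ℂ] ℂ) (hψpos : ∀ b : B, 0 ≤ b → 0 ≤ ψ b)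
    (hψfaithful : ∀ b : B, 0 ≤ b → ψ b = 0 → b = 0) {z : B} (hz : IsSelfAdjoint z)
    (h : ∀ b : B, 0 ≤ ψ (star b * z * b)) : 0 ≤ z := by
  have hq : 0 ≤ z⁻ := CFC.negPart_nonneg z
  have hq_sa : IsSelfAdjoint z⁻ := .of_nonneg hq
  have hcube : 0 ≤ z⁻ * z⁻ * z⁻ := conjugate_nonneg_of_nonneg hq hq
  have hcompress : star z⁻ * z * z⁻ = -(z⁻ * z⁻ * z⁻) := by
    calc star z⁻ * z * z⁻ = z⁻ * (z⁺ - z⁻) * z⁻ := by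
          rw [hq_sa.star_eq, CFC.posPart_sub_negPart z hz]
      _ = -(z⁻ * z⁻ * z⁻) := by rw [mul_sub, CFC.negPart_mul_posPart, zero_sub, neg_mul]
  have hψcube : ψ (z⁻ * z⁻ * z⁻) = 0 :=
    le_antisymm (by simpa [hcompress] using h z⁻) (hψpos _ hcube)
  have hq0 : z⁻ = 0 :=
    hq_sa.eq_zero_of_mul_mul_self_eq_zero (hψfaithful _ hcube hψcube)
  rw [← CFC.posPart_sub_negPart z hz, hq0, sub_zero]
  exact CFC.posPart_nonneg z

section Localization

open CStarModuleRight

variable {B : Type*} [NonUnitalCStarAlgebra B] [PartialOrder B]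
  {E : Type*} [NormedAddCommGroup E] [NormedSpace ℂ E] [SMul Bᵐᵒᵖ E] [CStarModuleRight B E]
  {ψ : B →ₗ[ℂ] ℂ}
  {Eψ : Type*} [NormedAddCommGroup Eψ] [InnerProductSpace ℂ Eψ]
  {j : E →ₗ[ℂ] Eψ} (hj : ∀ f g : E, inner ℂ (j f) (j g) = ψ (inner B f g))
include hj

lemma ofReal_norm_map_sq (g : E) : ((‖j g‖ ^ 2 : ℝ) : ℂ) = ψ (inner B g g) := by
  rw [← hj, inner_self_eq_norm_sq_to_K]
  norm_cast

lemma norm_map_le (hψbound : ∀ b : B, ‖ψ b‖ ≤ ‖b‖) (g : E) : ‖j g‖ ≤ ‖g‖ := by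
  refine le_of_pow_le_pow_left₀ two_ne_zero (norm_nonneg g) ?_
  calc ‖j g‖ ^ 2 = ‖ψ (inner B g g)‖ := by
        rw [← ofReal_norm_map_sq hj, Complex.norm_real, Real.norm_of_nonneg (by positivity)]
    _ ≤ ‖g‖ ^ 2 := (hψbound _).trans_eq (norm_sq_eq (A := B)).symm

lemma norm_map_apply_le_of_adjoint [StarOrderedRing B] (hψbound : ∀ b : B, ‖ψ b‖ ≤ ‖b‖)
    {T S : E →L[ℂ] E} (hT : IsAdjointPair B T S) (f : E) : ‖j (T f)‖ ≤ ‖T‖ * ‖j f‖ := by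
  set R : E →L[ℂ] E := S.comp T
  have hRx : ∀ x, R x = S (T x) := fun _ => rfl
  have hR : ∀ x y, inner ℂ (j (R x)) (j y) = inner ℂ (j x) (j (R y)) := fun x y => by
    rw [hj, hj, hRx, hRx, hT.symm, hT]
  have hRnorm : ‖R‖ ≤ ‖T‖ ^ 2 :=
    (S.opNorm_comp_le T).trans (by rw [pow_two]; gcongr; exact hT.symm.opNorm_le)
  have hjR : ‖j (R f)‖ ≤ ‖R‖ * ‖j f‖ := by
    refine norm_map_apply_le_of_symmetric hR f (norm_nonneg R) (C := ‖f‖) fun n => ?_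
    calc ‖j (R^[n] f)‖ ≤ ‖R^[n] f‖ := norm_map_le hj hψbound _
      _ ≤ ‖R‖ ^ n * ‖f‖ := by
        simpa using (R.lipschitz.iterate n).norm_le_mul (iterate_map_zero R n) f
      _ = ‖f‖ * ‖R‖ ^ n := mul_comm _ _
  refine le_of_pow_le_pow_left₀ two_ne_zero (by positivity) ?_
  calc ‖j (T f)‖ ^ 2 = RCLike.re (inner ℂ (j f) (j (R f))) := by
        rw [← inner_self_eq_norm_sq (𝕜 := ℂ), hj, hj, hRx, hT]
    _ ≤ ‖j f‖ * ‖j (R f)‖ := (RCLike.re_le_norm _).trans (norm_inner_le_norm _ _)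
    _ ≤ ‖j f‖ * (‖T‖ ^ 2 * ‖j f‖) := by grw [hjR, hRnorm]
    _ = (‖T‖ * ‖j f‖) ^ 2 := by ring

variable [StarOrderedRing B] (hψpos : ∀ b : B, 0 ≤ b → 0 ≤ ψ b)
  (hψfaithful : ∀ b : B, 0 ≤ b → ψ b = 0 → b = 0)
include hψpos hψfaithful

lemma inner_self_apply_le_of_norm_map_apply_le {T S : E →L[ℂ] E} (hT : IsAdjointPair B T S)
    {c : ℝ} (h : ∀ f, ‖j (T f)‖ ≤ c * ‖j f‖) (f : E) :
    inner B (T f) (T f) ≤ c ^ 2 • inner B f f := by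
  rw [← sub_nonneg]
  refine nonneg_of_forall_nonneg_map_star_mul_mul ψ hψpos hψfaithful
    (((IsSelfAdjoint.all _).smul (star_inner f f)).sub (star_inner _ _)) fun b => ?_
  set v : E := MulOpposite.op b • f
  have hv : star b * (c ^ 2 • inner B f f - inner B (T f) (T f)) * b
      = c ^ 2 • inner B v v - inner B (T v) (T v) := by
    rw [hT.map_op_smul, inner_op_smul_left, inner_op_smul_right, inner_op_smul_left,
      inner_op_smul_right, mul_sub, sub_mul, mul_smul_comm, smul_mul_assoc, mul_assoc, mul_assoc]
  have hsq : ‖j (T v)‖ ^ 2 ≤ c ^ 2 * ‖j v‖ ^ 2 := by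
    rw [← mul_pow]; exact pow_le_pow_left₀ (norm_nonneg _) (h v) 2
  rw [hv, map_sub, LinearMap.map_smul_of_tower, ← ofReal_norm_map_sq hj,
    ← ofReal_norm_map_sq hj, Complex.real_smul, ← Complex.ofReal_mul, ← Complex.ofReal_sub,
    Complex.zero_le_real, sub_nonneg]
  exact hsq

lemma opNorm_le_of_norm_map_apply_le {T S : E →L[ℂ] E} (hT : IsAdjointPair B T S)
    {c : ℝ} (hc : 0 ≤ c) (h : ∀ f, ‖j (T f)‖ ≤ c * ‖j f‖) : ‖T‖ ≤ c := by
  refine T.opNorm_le_bound hc fun f => le_of_pow_le_pow_left₀ two_ne_zero (by positivity) ?_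
  calc ‖T f‖ ^ 2 = ‖inner B (T f) (T f)‖ := norm_sq_eq
    _ ≤ ‖c ^ 2 • inner B f f‖ := CStarAlgebra.norm_le_norm_of_nonneg_of_le inner_self_nonneg
        (inner_self_apply_le_of_norm_map_apply_le hj hψpos hψfaithful hT h f)
    _ = (c * ‖f‖) ^ 2 := by
        rw [norm_smul, Real.norm_of_nonneg (sq_nonneg c), ← norm_sq_eq, mul_pow]

end Localization

theorem stmt_16_general {B : Type*} [NonUnitalCStarAlgebra B] [PartialOrder B] [StarOrderedRing B]
    {E : Type*} [NormedAddCommGroup E] [NormedSpace ℂ E] [SMul Bᵐᵒᵖ E] [CStarModuleRight B E]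
    -- `ψ` is a faithful state of `B`:
    (ψ : B →ₗ[ℂ] ℂ)
    (hψpos : ∀ b : B, 0 ≤ b → 0 ≤ ψ b)
    (hψfaithful : ∀ b : B, 0 ≤ b → ψ b = 0 → b = 0)
    (hψbound : ∀ b : B, ‖ψ b‖ ≤ ‖b‖)
    -- `E_ψ`, realized as the closure of the image of a dense map `j : E → E_ψ`:
    {Eψ : Type*} [NormedAddCommGroup Eψ] [InnerProductSpace ℂ Eψ] [CompleteSpace Eψ]
    (j : E →ₗ[ℂ] Eψ) (hdense : DenseRange j)
    (hj : ∀ f g : E, inner ℂ (j f) (j g) = ψ (inner B f g)) :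
    ∀ T Tadj : E →L[ℂ] E,
      (∀ f g : E, inner B (T f) g = inner B f (Tadj g)) →
      ∃ T' : Eψ →L[ℂ] Eψ, (∀ f : E, T' (j f) = j (T f)) ∧ ‖T'‖ = ‖T‖ := by
  intro T Tadj hT
  have hbound : ∀ f, ‖j (T f)‖ ≤ ‖T‖ * ‖j f‖ := norm_map_apply_le_of_adjoint hj hψbound hT
  let T' : Eψ →L[ℂ] Eψ := (j ∘ₗ (T : E →ₗ[ℂ] E)).extendOfNorm j
  have hT'j : ∀ f, T' (j f) = j (T f) := LinearMap.extendOfNorm_eq hdense ⟨_, hbound⟩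
  refine ⟨T', hT'j, le_antisymm ?_ ?_⟩
  · exact T'.opNorm_le_bound (norm_nonneg T) (LinearMap.norm_extendOfNorm_apply_le hdense _ hbound)
  · refine opNorm_le_of_norm_map_apply_le hj hψpos hψfaithful hT (norm_nonneg T') fun f => ?_
    rw [← hT'j]
    exact T'.le_opNorm (j f)

/-- Let `E` be a Hilbert module over a C*-algebra `B`, `ψ` a faithful state of `B`, and
`E_ψ` the Hilbert space completion of `E` in the inner product `⟨f,g⟩_ψ = ψ(⟨f,g⟩_B)`
(modelled by a dense linear map `j : E → E_ψ` compatible with the inner products).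
Then every bounded adjointable operator `T` on `E` extends to a bounded operator `T'` on
`E_ψ`, and the localization map `T ↦ T'` is an injective, hence isometric, homomorphism
of C*-algebras: `‖T'‖ = ‖T‖`. -/
theorem stmt_16 {B : Type*} [NonUnitalCStarAlgebra B] [PartialOrder B] [StarOrderedRing B]
    {E : Type*} [NormedAddCommGroup E] [NormedSpace ℂ E] [SMul Bᵐᵒᵖ E] [CStarModuleRight B E]
    [CompleteSpace E]
    -- `ψ` is a faithful state of `B`:
    (ψ : B →ₗ[ℂ] ℂ)
    (hψpos : ∀ b : B, 0 ≤ b → 0 ≤ ψ b)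
    (hψfaithful : ∀ b : B, 0 ≤ b → ψ b = 0 → b = 0)
    (hψbound : ∀ b : B, ‖ψ b‖ ≤ ‖b‖)
    -- `E_ψ`, realized as the closure of the image of a dense map `j : E → E_ψ`:
    {Eψ : Type*} [NormedAddCommGroup Eψ] [InnerProductSpace ℂ Eψ] [CompleteSpace Eψ]
    (j : E →ₗ[ℂ] Eψ) (hdense : DenseRange j)
    (hj : ∀ f g : E, inner ℂ (j f) (j g) = ψ (inner B f g)) :
    ∀ T Tadj : E →L[ℂ] E,
      (∀ f g : E, inner B (T f) g = inner B f (Tadj g)) →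
      ∃ T' : Eψ →L[ℂ] Eψ, (∀ f : E, T' (j f) = j (T f)) ∧ ‖T'‖ = ‖T‖ :=
  stmt_16_general ψ hψpos hψfaithful hψbound j hdense hj
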